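/- arXiv:2309.14317 — 2 statements merged into one kernel-verified Lean document; each statement's English description precedes it below -/
import Mathlib

section
/- Let ρ > 0, x ∈ [0,1], c ≥ 0, θ > 0, and b̄ > 0. The unique maximizer of g(b) = ρ·(x + b)/(1 + b + c) − θ·b over b ∈ [0, b̄] is b* = min{ max{ √(ρ(1 − x + c)/θ) − 1 − c, 0 }, b̄ }, provided 1 − x + c > 0. -/
/-!
Writing `A = ρ (1 - x + c)`, we have `g b = ρ - A / (1 + b + c) - θ b`. The function
`b ↦ -A / (b + d) - θ b` increases as long as `b + d ≤ √(A / θ)` and decreases afterwards,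
so its unique maximizer over an interval is the unconstrained maximizer `√(A / θ) - d`
clamped to that interval.
-/

open Set

section Clamp

variable {α β : Type*} [LinearOrder α] [Preorder β]

theorem min_max_mem_Icc {lo hi : α} (h : lo ≤ hi) (m : α) : min (max m lo) hi ∈ Icc lo hi :=
  ⟨le_min (le_max_right m lo) h, min_le_right _ _⟩

theorem lt_apply_min_max_of_strictMonoOn_of_strictAntiOn {f : α → β} {lo hi m : α}
    (hmono : StrictMonoOn f (Icc lo hi ∩ Iic m)) (hanti : StrictAntiOn f (Icc lo hi ∩ Ici m))
    {b : α} (hb : b ∈ Icc lo hi) (hne : b ≠ min (max m lo) hi) :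
    f b < f (min (max m lo) hi) := by
  have hp := min_max_mem_Icc (hb.1.trans hb.2) m
  rcases hne.lt_or_gt with hlt | hgt
  · have hpm : min (max m lo) hi ≤ m :=
      (le_max_iff.mp (min_le_left _ hi)).resolve_right (hb.1.trans_lt hlt).not_ge
    exact hmono ⟨hb, hlt.le.trans hpm⟩ ⟨hp, hpm⟩ hlt
  · have hmhi : max m lo < hi :=
      (min_lt_iff.mp (hgt.trans_le hb.2)).resolve_right (lt_irrefl hi)
    have hmp : m ≤ min (max m lo) hi :=
      le_min (le_max_left m lo) ((le_max_left m lo).trans hmhi.le)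
    exact hanti ⟨hp, hmp⟩ ⟨hb, hmp.trans hgt.le⟩ hgt

end Clamp

section Reciprocal

variable {A θ d : ℝ}

theorem neg_div_sub_mul_sub_neg_div_sub_mul {s t : ℝ} (hs : s + d ≠ 0) (ht : t + d ≠ 0) :
    (-A / (t + d) - θ * t) - (-A / (s + d) - θ * s)
      = (t - s) * (A - θ * ((s + d) * (t + d))) / ((s + d) * (t + d)) := by
  field_simp
  ring

theorem strictMonoOn_neg_div_sub_mul (hθ : 0 < θ) (hA : 0 ≤ A) :
    StrictMonoOn (fun b => -A / (b + d) - θ * b) (Ioc (-d) (√(A / θ) - d)) := by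
  intro s hs t ht hst
  have hs0 : 0 < s + d := by linarith [hs.1]
  have ht0 : 0 < t + d := by linarith [ht.1]
  have hprod : (s + d) * (t + d) < √(A / θ) * √(A / θ) :=
    calc (s + d) * (t + d) < (t + d) * (t + d) := by gcongr
      _ ≤ √(A / θ) * √(A / θ) := mul_self_le_mul_self ht0.le (by linarith [ht.2])
  rw [Real.mul_self_sqrt (div_nonneg hA hθ.le), lt_div_iff₀' hθ] at hprod
  rw [← sub_pos, neg_div_sub_mul_sub_neg_div_sub_mul hs0.ne' ht0.ne']
  exact div_pos (mul_pos (sub_pos.mpr hst) (sub_pos.mpr hprod)) (mul_pos hs0 ht0)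

theorem strictAntiOn_neg_div_sub_mul (hθ : 0 < θ) (hA : 0 < A) :
    StrictAntiOn (fun b => -A / (b + d) - θ * b) (Ici (√(A / θ) - d)) := by
  intro s hs t ht hst
  have hk : 0 < √(A / θ) := Real.sqrt_pos.mpr (div_pos hA hθ)
  have hs0 : 0 < s + d := by linarith [mem_Ici.mp hs]
  have ht0 : 0 < t + d := by linarith
  have hprod : √(A / θ) * √(A / θ) < (s + d) * (t + d) :=
    calc √(A / θ) * √(A / θ) ≤ (s + d) * (s + d) :=
          mul_self_le_mul_self hk.le (by linarith [mem_Ici.mp hs])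
      _ < (s + d) * (t + d) := by gcongr
  rw [Real.mul_self_sqrt (div_nonneg hA.le hθ.le), div_lt_iff₀' hθ] at hprod
  rw [← sub_neg, neg_div_sub_mul_sub_neg_div_sub_mul hs0.ne' ht0.ne']
  exact div_neg_of_neg_of_pos (mul_neg_of_pos_of_neg (sub_pos.mpr hst) (sub_neg.mpr hprod))
    (mul_pos hs0 ht0)

end Reciprocal

theorem stmt_3_general (ρ x c θ bbar : ℝ) (hρ : 0 < ρ)
    (hc : 0 ≤ c) (hθ : 0 < θ) (hbbar : 0 < bbar) (hpos : 0 < 1 - x + c)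
    (g : ℝ → ℝ) (hg : g = fun b => ρ * (x + b) / (1 + b + c) - θ * b)
    (bstar : ℝ)
    (hbstar : bstar = min (max (Real.sqrt (ρ * (1 - x + c) / θ) - 1 - c) 0) bbar) :
    bstar ∈ Set.Icc 0 bbar ∧
    (∀ b ∈ Set.Icc (0:ℝ) bbar, g b ≤ g bstar) ∧
    (∀ b ∈ Set.Icc (0:ℝ) bbar, g b = g bstar → b = bstar) := by
  have hA : 0 < ρ * (1 - x + c) := mul_pos hρ hpos
  have hg_eq : ∀ b ∈ Icc (0:ℝ) bbar,
      g b = ρ + (-(ρ * (1 - x + c)) / (b + (1 + c)) - θ * b) := fun b hb => by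
    have : 1 + b + c ≠ 0 := by linarith [hb.1]
    rw [hg, show b + (1 + c) = 1 + b + c by ring]
    field_simp
    ring
  have hmono : StrictMonoOn g (Icc 0 bbar ∩ Iic (√(ρ * (1 - x + c) / θ) - 1 - c)) :=
    fun s hs t ht hst => by
      rw [hg_eq s hs.1, hg_eq t ht.1, add_lt_add_iff_left]
      refine strictMonoOn_neg_div_sub_mul hθ hA.le ⟨?_, ?_⟩ ⟨?_, ?_⟩ hst <;>
        linarith [hs.1.1, ht.1.1, mem_Iic.mp hs.2, mem_Iic.mp ht.2]
  have hanti : StrictAntiOn g (Icc 0 bbar ∩ Ici (√(ρ * (1 - x + c) / θ) - 1 - c)) :=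
    fun s hs t ht hst => by
      rw [hg_eq s hs.1, hg_eq t ht.1, add_lt_add_iff_left]
      refine strictAntiOn_neg_div_sub_mul hθ hA (mem_Ici.mpr ?_) (mem_Ici.mpr ?_) hst <;>
        linarith [mem_Ici.mp hs.2, mem_Ici.mp ht.2]
  have hlt : ∀ b ∈ Icc (0:ℝ) bbar, b ≠ bstar → g b < g bstar := fun b hb hne => by
    subst hbstar
    exact lt_apply_min_max_of_strictMonoOn_of_strictAntiOn hmono hanti hb hne
  refine ⟨hbstar ▸ min_max_mem_Icc hbbar.le _, fun b hb => ?_, fun b hb heq => ?_⟩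
  · rcases eq_or_ne b bstar with rfl | hne
    · exact le_rfl
    · exact (hlt b hb hne).le
  · by_contra hne
    exact (hlt b hb hne).ne heq

theorem stmt_3 (ρ x c θ bbar : ℝ) (hρ : 0 < ρ) (hx : x ∈ Set.Icc (0:ℝ) 1)
    (hc : 0 ≤ c) (hθ : 0 < θ) (hbbar : 0 < bbar) (hpos : 0 < 1 - x + c)
    (g : ℝ → ℝ) (hg : g = fun b => ρ * (x + b) / (1 + b + c) - θ * b)
    (bstar : ℝ)
    (hbstar : bstar = min (max (Real.sqrt (ρ * (1 - x + c) / θ) - 1 - c) 0) bbar) :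
    bstar ∈ Set.Icc 0 bbar ∧
    (∀ b ∈ Set.Icc (0:ℝ) bbar, g b ≤ g bstar) ∧
    (∀ b ∈ Set.Icc (0:ℝ) bbar, g b = g bstar → b = bstar) :=
  stmt_3_general ρ x c θ bbar hρ hc hθ hbbar hpos g hg bstar hbstar
end

section
/- Fix m ≥ 2, ρ > 0, opinions x_j ∈ [0,1] with Σ_j x_j = 1, and positive duals θ₁,…,θ_m with Σ_j θ_j > 0. If the numbers b_j := ((m−1)ρ/Σ_ℓ θ_ℓ)·(1 − (m−1)θ_j/Σ_ℓ θ_ℓ) − x_j are all nonnegative, then they satisfy the interior stationarity system b_j = −(θ_j/ρ)·G² + G − x_j for all j, where G = 1 + Σ_j b_j, and moreover G = (m−1)ρ/Σ_ℓ θ_ℓ. -/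
/-!
Put `S = ∑ θ` and `G₀ = (m - 1) ρ / S`. Since `∑ x = 1` and the weights `(m - 1) θ_j / S` sum to
`m - 1`, summing `b_j = G₀ (1 - (m - 1) θ_j / S) - x_j` gives `∑ b = G₀ - 1`, i.e. `G = G₀`.
Stationarity then reduces to `G₀ / ρ = (m - 1) / S`, which is the definition of `G₀`.
-/

open Finset

lemma sum_one_sub_mul_div_sum {ι : Type*} [Fintype ι] (θ : ι → ℝ) (c : ℝ)
    (hθ : ∑ ℓ, θ ℓ ≠ 0) :
    ∑ j, (1 - c * θ j / ∑ ℓ, θ ℓ) = Fintype.card ι - c := by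
  rw [sum_sub_distrib, ← sum_div, ← mul_sum, mul_div_assoc, div_self hθ]
  simp

lemma mul_one_sub_eq_stationary {ρ S : ℝ} (hρ : ρ ≠ 0) (hS : S ≠ 0) (k t : ℝ) :
    (k * ρ / S) * (1 - k * t / S) = -(t / ρ) * (k * ρ / S) ^ 2 + k * ρ / S := by
  field_simp
  ring

theorem stmt_12_general (m : ℕ) (ρ : ℝ) (hρ : 0 < ρ)
    (x θ : Fin m → ℝ)
    (hxsum : ∑ j, x j = 1)
    (hθsum : 0 < ∑ ℓ, θ ℓ)
    (b : Fin m → ℝ)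
    (hb : b = fun j =>
      ((m - 1 : ℝ) * ρ / ∑ ℓ, θ ℓ) * (1 - (m - 1 : ℝ) * θ j / ∑ ℓ, θ ℓ) - x j)
    (G : ℝ) (hG : G = 1 + ∑ j, b j) :
    (∀ j, b j = -(θ j / ρ) * G ^ 2 + G - x j) ∧
    G = (m - 1 : ℝ) * ρ / ∑ ℓ, θ ℓ := by
  have hS : ∑ ℓ, θ ℓ ≠ 0 := hθsum.ne'
  have hGval : G = (m - 1 : ℝ) * ρ / ∑ ℓ, θ ℓ := by
    rw [hG, hb, sum_sub_distrib, hxsum, ← mul_sum, sum_one_sub_mul_div_sum θ _ hS,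
      Fintype.card_fin]
    ring
  refine ⟨fun j => ?_, hGval⟩
  simp only [hb, hGval, mul_one_sub_eq_stationary hρ.ne' hS]

theorem stmt_12 (m : ℕ) (hm : 2 ≤ m) (ρ : ℝ) (hρ : 0 < ρ)
    (x θ : Fin m → ℝ)
    (hx : ∀ j, x j ∈ Set.Icc (0:ℝ) 1) (hxsum : ∑ j, x j = 1)
    (hθ : ∀ j, 0 < θ j) (hθsum : 0 < ∑ ℓ, θ ℓ)
    (b : Fin m → ℝ)
    (hb : b = fun j =>
      ((m - 1 : ℝ) * ρ / ∑ ℓ, θ ℓ) * (1 - (m - 1 : ℝ) * θ j / ∑ ℓ, θ ℓ) - x j)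
    (hbnonneg : ∀ j, 0 ≤ b j)
    (G : ℝ) (hG : G = 1 + ∑ j, b j) :
    (∀ j, b j = -(θ j / ρ) * G ^ 2 + G - x j) ∧
    G = (m - 1 : ℝ) * ρ / ∑ ℓ, θ ℓ :=
  stmt_12_general m ρ hρ x θ hxsum hθsum b hb G hG
end
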